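/- arXiv:2207.08039 — 3 statements merged into one kernel-verified Lean document; each statement's English description precedes it below -/
import Mathlib

section
/- Let Ω ⊆ ℝⁿ (n ≥ 2) be a bounded domain, let 𝒮 be a valid subdivision for Ω, and let z₀ and z be two points of ⋃_{S∈𝒮} S. Let S₀, S₁, …, S_j ∈ 𝒮 be a sequence of sets such that z₀ ∈ S₀, z ∈ S_j, and ∂S_i ∩ ∂S_{i+1} ≠ ∅ for 0 ≤ i < j. Then k(z, z₀; Ω) ≤ 2 Σ_{i=0}^{j} d(S_i)/δ(S_i). -/
/-!
Join `z` to `z₀` by a polygon that, inside each `Sᵢ` of the chain, runs from an entry point to a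
star centre `pᵢ` of `Sᵢ` and on to an exit point in `∂Sᵢ ∩ ∂Sᵢ₊₁ ⊆ Sᵢ`. By star-shapedness both
segments lie in `Sᵢ`, so each is no longer than `d(Sᵢ)` and stays at distance at least `δ(Sᵢ)` from
`∂Ω`. Traversed at constant speed, such a segment has quasihyperbolic length at most
`d(Sᵢ) / δ(Sᵢ)`, and there are two segments per set.
-/

open MeasureTheory Metric Set
open scoped ENNReal

/-- The quasihyperbolic distance `k(z, z₀; Ω)`: the infimum, over all Lipschitz curves
`γ : [0,1] → Ω` joining `z` to `z₀`, of `∫ ‖γ'(t)‖ / d(γ(t), ∂Ω) dt`. -/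
noncomputable def qhDist {n : ℕ} (Ω : Set (EuclideanSpace ℝ (Fin n)))
    (z z₀ : EuclideanSpace ℝ (Fin n)) : ℝ :=
  sInf {L : ℝ | ∃ γ : ℝ → EuclideanSpace ℝ (Fin n),
    (∃ K : NNReal, LipschitzWith K γ) ∧ γ 0 = z ∧ γ 1 = z₀ ∧
    (∀ t ∈ Set.Icc (0:ℝ) 1, γ t ∈ Ω) ∧
    L = ∫ t in (0:ℝ)..1, ‖deriv γ t‖ / Metric.infDist (γ t) (frontier Ω)}

/-- The distance between two sets (used for the distance `δ(S)` from `S` to `∂Ω`). -/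
noncomputable def setDist {n : ℕ} (A B : Set (EuclideanSpace ℝ (Fin n))) : ℝ :=
  sInf {d : ℝ | ∃ a ∈ A, ∃ b ∈ B, d = dist a b}

/-- `𝒮` is a valid subdivision of `Ω`: closed star-shaped subsets of `Ω`, pairwise
intersecting in measure zero, covering `Ω` up to measure zero, and any two points of
`⋃₀ 𝒮` are joined by a finite chain of sets of `𝒮` with consecutively touching boundaries. -/
def IsValidSubdivision {n : ℕ} (Ω : Set (EuclideanSpace ℝ (Fin n)))
    (𝒮 : Set (Set (EuclideanSpace ℝ (Fin n)))) : Prop :=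
  (∀ S ∈ 𝒮, IsClosed S ∧ S ⊆ Ω ∧ ∃ p ∈ S, StarConvex ℝ p S) ∧
  (∀ S ∈ 𝒮, ∀ T ∈ 𝒮, S ≠ T → volume (S ∩ T) = 0) ∧
  volume (Ω \ ⋃₀ 𝒮) = 0 ∧
  ∀ z₀ ∈ ⋃₀ 𝒮, ∀ z ∈ ⋃₀ 𝒮, ∃ (j : ℕ) (c : ℕ → Set (EuclideanSpace ℝ (Fin n))),
    (∀ i ≤ j, c i ∈ 𝒮) ∧ z₀ ∈ c 0 ∧ z ∈ c j ∧
    ∀ i < j, (frontier (c i) ∩ frontier (c (i+1))).Nonempty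

noncomputable section

open AffineMap

lemma exists_lt_mem_Icc_div {m : ℕ} (hm : 0 < m) {t : ℝ} (ht : t ∈ Icc (0 : ℝ) 1) :
    ∃ k < m, t ∈ Icc ((k : ℝ) / m) ((k + 1) / m) := by
  have hmR : (0 : ℝ) < m := by exact_mod_cast hm
  have hmt : 0 ≤ (m : ℝ) * t := mul_nonneg hmR.le ht.1
  refine ⟨min ⌊(m : ℝ) * t⌋₊ (m - 1), by omega, ?_, ?_⟩
  · rw [div_le_iff₀' hmR]
    exact (Nat.cast_le.mpr (min_le_left _ _)).trans (Nat.floor_le hmt)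
  · rw [le_div_iff₀' hmR]
    rcases min_cases ⌊(m : ℝ) * t⌋₊ (m - 1) with ⟨h, -⟩ | ⟨h, -⟩ <;> rw [h]
    · exact (Nat.lt_floor_add_one _).le
    · rw [Nat.cast_pred hm, sub_add_cancel]
      nlinarith [ht.2]

section Segment

variable {E : Type*} [NormedAddCommGroup E] [NormedSpace ℝ E]

lemma deriv_eq_of_eqOn_lineMap {γ : ℝ → E} {a b : ℝ} {x y : E}
    (hγ : EqOn γ (fun t => lineMap x y ((t - a) / (b - a))) (Icc a b)) {t : ℝ} (ht : t ∈ Ioo a b) :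
    deriv γ t = (b - a)⁻¹ • (y - x) := by
  have hnhds : γ =ᶠ[nhds t] fun t => lineMap x y ((t - a) / (b - a)) :=
    Filter.eventuallyEq_of_mem (Icc_mem_nhds ht.1 ht.2) hγ
  rw [hnhds.deriv_eq]
  have hparam : HasDerivAt (fun t => (t - a) / (b - a)) (b - a)⁻¹ t := by
    simpa using ((hasDerivAt_id t).sub_const a).div_const (b - a)
  exact (hasDerivAt_lineMap.scomp t hparam).deriv

lemma mem_segment_of_eqOn_lineMap {γ : ℝ → E} {a b : ℝ} {x y : E} (hab : a < b)
    (hγ : EqOn γ (fun t => lineMap x y ((t - a) / (b - a))) (Icc a b)) {t : ℝ} (ht : t ∈ Icc a b) :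
    γ t ∈ segment ℝ x y := by
  have hba : 0 < b - a := sub_pos.mpr hab
  rw [hγ ht]
  exact lineMap_mem_segment ℝ x y
    ⟨div_nonneg (by linarith [ht.1]) hba.le, (div_le_one hba).mpr (by linarith [ht.2])⟩

lemma integral_norm_deriv_div_infDist_le {γ : ℝ → E} {F : Set E} {a b δ : ℝ} {x y : E}
    (hab : a < b) (hγ : EqOn γ (fun t => lineMap x y ((t - a) / (b - a))) (Icc a b))
    (hδ : 0 < δ) (hF : ∀ p ∈ segment ℝ x y, δ ≤ infDist p F) :
    IntervalIntegrable (fun t => ‖deriv γ t‖ / infDist (γ t) F) volume a b ∧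
      ∫ t in a..b, ‖deriv γ t‖ / infDist (γ t) F ≤ dist x y / δ := by
  have hba : 0 < b - a := sub_pos.mpr hab
  set h : ℝ → ℝ := fun t => (b - a)⁻¹ * dist x y / infDist (γ t) F
  have hEq : EqOn (fun t => ‖deriv γ t‖ / infDist (γ t) F) h (uIoo a b) := fun t ht => by
    rw [uIoo_of_le hab.le] at ht
    simp only [h, deriv_eq_of_eqOn_lineMap hγ ht, norm_smul, norm_inv, Real.norm_eq_abs,
      abs_of_pos hba, dist_eq_norm_sub']
  have hδle : ∀ t ∈ Icc a b, δ ≤ infDist (γ t) F := fun t ht =>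
    hF _ (mem_segment_of_eqOn_lineMap hab hγ ht)
  have hcont : ContinuousOn h (uIcc a b) := by
    rw [uIcc_of_le hab.le]
    have hγcont : ContinuousOn γ (Icc a b) :=
      (by fun_prop : Continuous fun t => lineMap x y ((t - a) / (b - a))).continuousOn.congr hγ
    exact continuousOn_const.div ((continuous_infDist_pt F).comp_continuousOn hγcont)
      fun t ht => (hδ.trans_le (hδle t ht)).ne'
  refine ⟨hcont.intervalIntegrable.congr_uIoo hEq.symm, ?_⟩
  rw [intervalIntegral.integral_congr_uIoo hEq]
  calc ∫ t in a..b, h t ≤ ∫ _ in a..b, (b - a)⁻¹ * dist x y / δ :=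
        intervalIntegral.integral_mono_on hab.le hcont.intervalIntegrable intervalIntegrable_const
          fun t ht => div_le_div_of_nonneg_left (by positivity) hδ (hδle t ht)
    _ = dist x y / δ := by
        rw [intervalIntegral.integral_const, smul_eq_mul]
        field_simp

end Segment

section Polygon

variable {E : Type*} [NormedAddCommGroup E] [NormedSpace ℝ E]

/-- The `k`-th summand ramps from `0` to `1` while `t` runs over `[k/m, (k+1)/m]`, so that edge
`[q k, q (k+1)]` is traversed at constant speed on that interval. -/
def polygon (q : ℕ → E) (m : ℕ) (t : ℝ) : E :=
  q 0 + ∑ k ∈ Finset.range m, (projIcc (0 : ℝ) 1 zero_le_one (m * t - k) : ℝ) • (q (k + 1) - q k)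

variable (q : ℕ → E) (m : ℕ)

lemma polygon_zero : polygon q m 0 = q 0 := by
  refine add_eq_left.mpr (Finset.sum_eq_zero fun k _ => ?_)
  rw [projIcc_of_le_left _ (by simp), Subtype.coe_mk, zero_smul]

lemma polygon_one : polygon q m 1 = q m := by
  have hterm : ∀ k ∈ Finset.range m,
      (projIcc (0 : ℝ) 1 zero_le_one (m * 1 - k) : ℝ) • (q (k + 1) - q k) = q (k + 1) - q k := by
    intro k hk
    have : (k : ℝ) + 1 ≤ m := by exact_mod_cast Finset.mem_range.mp hk
    rw [projIcc_of_right_le _ (by linarith), Subtype.coe_mk, one_smul]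
  rw [polygon, Finset.sum_congr rfl hterm, Finset.sum_range_sub]
  abel

lemma polygon_eq_lineMap {k : ℕ} (hk : k < m) {t : ℝ} (ht : (m : ℝ) * t - k ∈ Icc (0 : ℝ) 1) :
    polygon q m t = lineMap (q k) (q (k + 1)) ((m : ℝ) * t - k) := by
  have hdone : ∀ i ∈ Finset.range k,
      (projIcc (0 : ℝ) 1 zero_le_one (m * t - i) : ℝ) • (q (i + 1) - q i) = q (i + 1) - q i := by
    intro i hi
    have : (i : ℝ) + 1 ≤ k := by exact_mod_cast Finset.mem_range.mp hi
    rw [projIcc_of_right_le _ (by linarith [ht.1]), Subtype.coe_mk, one_smul]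
  have hpending : ∀ i ∈ Finset.Ico (k + 1) m,
      (projIcc (0 : ℝ) 1 zero_le_one (m * t - i) : ℝ) • (q (i + 1) - q i) = 0 := by
    intro i hi
    have : (k : ℝ) + 1 ≤ i := by exact_mod_cast (Finset.mem_Ico.mp hi).1
    rw [projIcc_of_le_left _ (by linarith [ht.2]), Subtype.coe_mk, zero_smul]
  rw [polygon, ← Finset.sum_range_add_sum_Ico _ hk, Finset.sum_range_succ,
    Finset.sum_congr rfl hdone, Finset.sum_range_sub, Finset.sum_eq_zero hpending,
    projIcc_of_mem _ ht, lineMap_apply_module']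
  abel

lemma dist_polygon_le (s t : ℝ) :
    dist (polygon q m s) (polygon q m t) ≤
      (∑ k ∈ Finset.range m, m * ‖q (k + 1) - q k‖) * dist s t := by
  rw [polygon, polygon, dist_add_left, dist_eq_norm, ← Finset.sum_sub_distrib, Finset.sum_mul]
  refine (norm_sum_le _ _).trans (Finset.sum_le_sum fun k _ => ?_)
  have hramp := (LipschitzWith.projIcc (zero_le_one' ℝ)).dist_le_mul (m * s - k) (m * t - k)
  rw [Subtype.dist_eq, NNReal.coe_one, one_mul, Real.dist_eq, Real.dist_eq] at hramp
  rw [← sub_smul, norm_smul, Real.norm_eq_abs, Real.dist_eq, mul_right_comm]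
  refine mul_le_mul_of_nonneg_right (hramp.trans_eq ?_) (norm_nonneg _)
  rw [sub_sub_sub_cancel_right, ← mul_sub, abs_mul, Nat.abs_cast]

lemma exists_lipschitzWith_polygon : ∃ K, LipschitzWith K (polygon q m) :=
  ⟨_, LipschitzWith.of_dist_le' (dist_polygon_le q m)⟩

lemma eqOn_polygon_lineMap {k : ℕ} (hk : k < m) :
    EqOn (polygon q m) (fun t => lineMap (q k) (q (k + 1)) ((t - k / m) / ((k + 1) / m - k / m)))
      (Icc ((k : ℝ) / m) ((k + 1) / m)) := by
  intro t ht
  have hm : (0 : ℝ) < m := by exact_mod_cast (Nat.zero_le k).trans_lt hk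
  have hparam : (t - k / m) / ((k + 1) / m - k / m) = (m : ℝ) * t - k := by
    field_simp
    ring
  simp only [hparam]
  refine polygon_eq_lineMap q m hk ⟨?_, ?_⟩
  · linarith [(div_le_iff₀' hm).mp ht.1]
  · linarith [(le_div_iff₀' hm).mp ht.2]

lemma exists_polygon_mem_segment (hm : 0 < m) {t : ℝ} (ht : t ∈ Icc (0 : ℝ) 1) :
    ∃ k < m, polygon q m t ∈ segment ℝ (q k) (q (k + 1)) := by
  obtain ⟨k, hk, hkt⟩ := exists_lt_mem_Icc_div hm ht
  exact ⟨k, hk, mem_segment_of_eqOn_lineMap (by gcongr; exact lt_add_one _)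
    (eqOn_polygon_lineMap q m hk) hkt⟩

lemma integral_polygon_le {F : Set E} (hm : 0 < m) {δ : ℕ → ℝ}
    (hδ : ∀ k < m, 0 < δ k) (hF : ∀ k < m, ∀ p ∈ segment ℝ (q k) (q (k + 1)), δ k ≤ infDist p F) :
    ∫ t in (0 : ℝ)..1, ‖deriv (polygon q m) t‖ / infDist (polygon q m t) F ≤
      ∑ k ∈ Finset.range m, dist (q k) (q (k + 1)) / δ k := by
  have hmR : (0 : ℝ) < m := by exact_mod_cast hm
  have hpiece : ∀ k < m,
      IntervalIntegrable (fun t => ‖deriv (polygon q m) t‖ / infDist (polygon q m t) F) volume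
        ((k : ℝ) / m) (((k + 1 : ℕ) : ℝ) / m) ∧
      ∫ t in (k : ℝ) / m..((k + 1 : ℕ) : ℝ) / m,
        ‖deriv (polygon q m) t‖ / infDist (polygon q m t) F ≤ dist (q k) (q (k + 1)) / δ k :=
    fun k hk => by
      rw [Nat.cast_succ]
      exact integral_norm_deriv_div_infDist_le (by gcongr; exact lt_add_one _)
        (eqOn_polygon_lineMap q m hk) (hδ k hk) (hF k hk)
  have hsplit := intervalIntegral.sum_integral_adjacent_intervals (a := fun k : ℕ => (k : ℝ) / m)
    (fun k hk => (hpiece k hk).1)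
  simp only [Nat.cast_zero, zero_div, div_self hmR.ne'] at hsplit
  rw [← hsplit]
  exact Finset.sum_le_sum fun k hk => (hpiece k (Finset.mem_range.mp hk)).2

end Polygon

/-- The vertices `e 0, p 0, e 1, p 1, …` of a chain with entry points `e i` and centres `p i`. -/
def chainVertex {E : Type*} (e p : ℕ → E) (k : ℕ) : E :=
  if Even k then e (k / 2) else p (k / 2)

lemma chainVertex_two_mul {E : Type*} (e p : ℕ → E) (i : ℕ) : chainVertex e p (2 * i) = e i := by
  simp [chainVertex]

lemma chainVertex_two_mul_add_one {E : Type*} (e p : ℕ → E) (i : ℕ) :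
    chainVertex e p (2 * i + 1) = p i := by
  simp [chainVertex, show (2 * i + 1) / 2 = i by omega]

section Chain

variable {E : Type*} [AddCommGroup E] [Module ℝ E]

lemma segment_chainVertex_subset {c : ℕ → Set E} {e p : ℕ → E} {j : ℕ}
    (hp : ∀ i ≤ j, StarConvex ℝ (p i) (c i)) (he : ∀ i ≤ j, e i ∈ c i ∧ e (i + 1) ∈ c i)
    {k : ℕ} (hk : k < 2 * (j + 1)) :
    segment ℝ (chainVertex e p k) (chainVertex e p (k + 1)) ⊆ c (k / 2) := by
  obtain ⟨i, rfl | rfl⟩ := Nat.even_or_odd' k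
  · have hij : i ≤ j := by omega
    rw [chainVertex_two_mul, chainVertex_two_mul_add_one, segment_symm,
      Nat.mul_div_cancel_left _ two_pos]
    exact (hp i hij).segment_subset (he i hij).1
  · have hij : i ≤ j := by omega
    rw [chainVertex_two_mul_add_one, show 2 * i + 1 + 1 = 2 * (i + 1) by ring, chainVertex_two_mul,
      show (2 * i + 1) / 2 = i by omega]
    exact (hp i hij).segment_subset (he i hij).2

end Chain

lemma sum_range_two_mul_comp_div_two {M : Type*} [AddCommMonoid M] (f : ℕ → M) (N : ℕ) :
    ∑ k ∈ Finset.range (2 * N), f (k / 2) = 2 • ∑ i ∈ Finset.range N, f i := by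
  induction N with
  | zero => simp
  | succ N ih =>
    rw [show 2 * (N + 1) = 2 * N + 1 + 1 by ring, Finset.sum_range_succ, Finset.sum_range_succ, ih,
      Finset.sum_range_succ, show (2 * N + 1) / 2 = N by omega, Nat.mul_div_cancel_left _ two_pos,
      smul_add, two_nsmul (f N), add_assoc]

lemma Bornology.IsBounded.nonempty_frontier {E : Type*} [NormedAddCommGroup E] [NormedSpace ℝ E]
    [Nontrivial E] {s : Set E} (hs : IsBounded s) (hne : s.Nonempty) : (frontier s).Nonempty :=
  nonempty_frontier_iff.mpr ⟨hne, fun huniv => NormedSpace.unbounded_univ ℝ E (huniv ▸ hs)⟩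

section Quasihyperbolic

variable {n : ℕ}

lemma setDist_le_infDist {S F : Set (EuclideanSpace ℝ (Fin n))} (hF : F.Nonempty)
    {x : EuclideanSpace ℝ (Fin n)} (hx : x ∈ S) : setDist S F ≤ infDist x F :=
  (le_infDist hF).mpr fun y hy =>
    csInf_le ⟨0, by rintro _ ⟨a, -, b, -, rfl⟩; exact dist_nonneg⟩ ⟨x, hx, y, hy, rfl⟩

lemma setDist_pos {S F : Set (EuclideanSpace ℝ (Fin n))} (hS : IsCompact S) (hSne : S.Nonempty)
    (hF : IsClosed F) (hFne : F.Nonempty) (hSF : Disjoint S F) : 0 < setDist S F := by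
  obtain ⟨x₀, hx₀, hmin⟩ := hS.exists_isMinOn hSne (continuous_infDist_pt F).continuousOn
  have hpos : 0 < infDist x₀ F :=
    (hF.notMem_iff_infDist_pos hFne).mp (hSF.notMem_of_mem_left hx₀)
  refine hpos.trans_le (le_csInf ?_ ?_)
  · exact ⟨_, x₀, hx₀, hFne.some, hFne.some_mem, rfl⟩
  · rintro _ ⟨a, ha, b, hb, rfl⟩
    exact (hmin ha).trans (infDist_le_dist_of_mem hb)

lemma qhDist_le_integral {Ω : Set (EuclideanSpace ℝ (Fin n))} {γ : ℝ → EuclideanSpace ℝ (Fin n)}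
    (hγ : ∃ K, LipschitzWith K γ) (hγΩ : ∀ t ∈ Icc (0 : ℝ) 1, γ t ∈ Ω) :
    qhDist Ω (γ 0) (γ 1) ≤ ∫ t in (0 : ℝ)..1, ‖deriv γ t‖ / infDist (γ t) (frontier Ω) := by
  refine csInf_le ⟨0, ?_⟩ ⟨γ, hγ, rfl, rfl, hγΩ, rfl⟩
  rintro _ ⟨γ', -, -, -, -, rfl⟩
  exact intervalIntegral.integral_nonneg zero_le_one fun _ _ =>
    div_nonneg (norm_nonneg _) infDist_nonneg

lemma qhDist_le_sum_of_segments {Ω : Set (EuclideanSpace ℝ (Fin n))}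
    (q : ℕ → EuclideanSpace ℝ (Fin n)) {m : ℕ} (hm : 0 < m) {δ : ℕ → ℝ} (hδ : ∀ k < m, 0 < δ k)
    (hΩ : ∀ k < m, segment ℝ (q k) (q (k + 1)) ⊆ Ω)
    (hF : ∀ k < m, ∀ p ∈ segment ℝ (q k) (q (k + 1)), δ k ≤ infDist p (frontier Ω)) :
    qhDist Ω (q 0) (q m) ≤ ∑ k ∈ Finset.range m, dist (q k) (q (k + 1)) / δ k := by
  have hpolygon := qhDist_le_integral (Ω := Ω) (exists_lipschitzWith_polygon q m) fun t ht => by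
    obtain ⟨k, hk, hmem⟩ := exists_polygon_mem_segment q m hm ht
    exact hΩ k hk hmem
  rw [polygon_zero, polygon_one] at hpolygon
  exact hpolygon.trans (integral_polygon_le q m hm hδ hF)

lemma qhDist_le_two_mul_sum_of_chain {Ω : Set (EuclideanSpace ℝ (Fin n))} (hΩ : IsOpen Ω)
    (hΩF : (frontier Ω).Nonempty) {c : ℕ → Set (EuclideanSpace ℝ (Fin n))} {j : ℕ}
    (hc : ∀ i ≤ j, IsCompact (c i) ∧ c i ⊆ Ω ∧ ∃ p ∈ c i, StarConvex ℝ p (c i))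
    {x y : EuclideanSpace ℝ (Fin n)} (hx : x ∈ c 0) (hy : y ∈ c j)
    (hlink : ∀ i < j, (c i ∩ c (i + 1)).Nonempty) :
    qhDist Ω x y ≤ 2 * ∑ i ∈ Finset.range (j + 1), diam (c i) / setDist (c i) (frontier Ω) := by
  choose! p hpc hp using fun i hi => (hc i hi).2.2
  choose! w hw using hlink
  set e : ℕ → EuclideanSpace ℝ (Fin n) := fun i =>
    if i = 0 then x else if i ≤ j then w (i - 1) else y
  have he : ∀ i ≤ j, e i ∈ c i ∧ e (i + 1) ∈ c i := fun i hi => by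
    refine ⟨?_, ?_⟩
    · rcases Nat.eq_zero_or_pos i with rfl | hi0
      · simpa [e] using hx
      · simpa [e, hi0.ne', hi, Nat.sub_add_cancel hi0] using (hw (i - 1) (by omega)).2
    · rcases hi.lt_or_eq with hij | rfl
      · simpa [e, Nat.succ_le_of_lt hij] using (hw i hij).1
      · simpa [e] using hy
  have hδ : ∀ k < 2 * (j + 1), 0 < setDist (c (k / 2)) (frontier Ω) := fun k hk =>
    setDist_pos (hc _ (by omega)).1 ⟨p _, hpc _ (by omega)⟩ isClosed_frontier hΩF
      ((disjoint_frontier_iff_isOpen.mpr hΩ).symm.mono_left (hc _ (by omega)).2.1)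
  have hseg : ∀ k < 2 * (j + 1),
      segment ℝ (chainVertex e p k) (chainVertex e p (k + 1)) ⊆ c (k / 2) :=
    fun k hk => segment_chainVertex_subset hp he hk
  have hpolygon := qhDist_le_sum_of_segments (chainVertex e p) (by omega) hδ
    (fun k hk => (hseg k hk).trans (hc _ (by omega)).2.1)
    (fun k hk z hz => setDist_le_infDist hΩF (hseg k hk hz))
  have hx' : chainVertex e p 0 = x := by simp [chainVertex, e]
  have hy' : chainVertex e p (2 * (j + 1)) = y := by simp [chainVertex_two_mul, e]
  rw [hx', hy'] at hpolygon
  calc qhDist Ω x y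
      ≤ ∑ k ∈ Finset.range (2 * (j + 1)), diam (c (k / 2)) / setDist (c (k / 2)) (frontier Ω) :=
        hpolygon.trans <| Finset.sum_le_sum fun k hk => by
          have hk := Finset.mem_range.mp hk
          refine div_le_div_of_nonneg_right ?_ (hδ k hk).le
          exact dist_le_diam_of_mem (hc _ (by omega)).1.isBounded
            (hseg k hk (left_mem_segment ℝ _ _)) (hseg k hk (right_mem_segment ℝ _ _))
    _ = 2 * ∑ i ∈ Finset.range (j + 1), diam (c i) / setDist (c i) (frontier Ω) := by
        rw [sum_range_two_mul_comp_div_two (fun i => diam (c i) / setDist (c i) (frontier Ω)),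
          two_nsmul, two_mul]

end Quasihyperbolic

end

theorem qh_chain_estimate_general {n : ℕ} (hn : 2 ≤ n)
    (Ω : Set (EuclideanSpace ℝ (Fin n))) (hΩop : IsOpen Ω)
    (hΩbd : Bornology.IsBounded Ω)
    (𝒮 : Set (Set (EuclideanSpace ℝ (Fin n)))) (h𝒮 : IsValidSubdivision Ω 𝒮)
    (z₀ z : EuclideanSpace ℝ (Fin n))
    (j : ℕ) (c : ℕ → Set (EuclideanSpace ℝ (Fin n)))
    (hc : ∀ i ≤ j, c i ∈ 𝒮) (hc0 : z₀ ∈ c 0) (hcj : z ∈ c j)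
    (hbd : ∀ i < j, (frontier (c i) ∩ frontier (c (i+1))).Nonempty) :
    qhDist Ω z z₀ ≤ 2 * ∑ i ∈ Finset.range (j+1), Metric.diam (c i) / setDist (c i) (frontier Ω) := by
  have hcell : ∀ i ≤ j, IsClosed (c i) ∧ c i ⊆ Ω ∧ ∃ p ∈ c i, StarConvex ℝ p (c i) :=
    fun i hi => h𝒮.1 _ (hc i hi)
  have : Nonempty (Fin n) := ⟨⟨0, by omega⟩⟩
  have hΩF := hΩbd.nonempty_frontier ⟨z, (hcell j le_rfl).2.1 hcj⟩
  have hchain := qhDist_le_two_mul_sum_of_chain hΩop hΩF (c := fun i => c (j - i)) (j := j)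
    (fun i hi => ⟨isCompact_of_isClosed_isBounded (hcell _ (by omega)).1
      (hΩbd.subset (hcell _ (by omega)).2.1), (hcell _ (by omega)).2⟩)
    (by simpa using hcj) (by simpa using hc0) fun i hi => by
      obtain ⟨w, hw⟩ := hbd (j - (i + 1)) (by omega)
      rw [show j - (i + 1) + 1 = j - i by omega] at hw
      exact ⟨w, (hcell _ (by omega)).1.frontier_subset hw.2,
        (hcell _ (by omega)).1.frontier_subset hw.1⟩
  rw [← Finset.sum_range_reflect]
  simpa only [add_tsub_cancel_right] using hchain

/-- Chain estimate for the quasihyperbolic distance from a valid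
subdivision. -/
theorem qh_chain_estimate {n : ℕ} (hn : 2 ≤ n)
    (Ω : Set (EuclideanSpace ℝ (Fin n))) (hΩop : IsOpen Ω) (hΩconn : IsConnected Ω)
    (hΩbd : Bornology.IsBounded Ω)
    (𝒮 : Set (Set (EuclideanSpace ℝ (Fin n)))) (h𝒮 : IsValidSubdivision Ω 𝒮)
    (z₀ z : EuclideanSpace ℝ (Fin n)) (hz₀ : z₀ ∈ ⋃₀ 𝒮) (hz : z ∈ ⋃₀ 𝒮)
    (j : ℕ) (c : ℕ → Set (EuclideanSpace ℝ (Fin n)))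
    (hc : ∀ i ≤ j, c i ∈ 𝒮) (hc0 : z₀ ∈ c 0) (hcj : z ∈ c j)
    (hbd : ∀ i < j, (frontier (c i) ∩ frontier (c (i+1))).Nonempty) :
    qhDist Ω z z₀ ≤ 2 * ∑ i ∈ Finset.range (j+1), Metric.diam (c i) / setDist (c i) (frontier Ω) :=
  qh_chain_estimate_general hn Ω hΩop hΩbd 𝒮 h𝒮 z₀ z j c hc hc0 hcj hbd
end

section
/- Let n ≥ 2 and α > 1. There exists a constant C(α) > 0 such that for all integers j, m ≥ 1, with ℓ = ⌊log₂ m⌋ + 1, the Euclidean distance from S_{j,m} to the boundary of Ω_α satisfies δ(S_{j,m}) ≥ C(α) · 2^{−(αj + ℓ)}. -/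
open MeasureTheory Metric Set
open scoped ENNReal

/-- The distance of `z` from the first coordinate axis. -/
noncomputable def radial {n : ℕ} [NeZero n] (z : EuclideanSpace ℝ (Fin n)) : ℝ :=
  Real.sqrt (∑ i ∈ Finset.univ.erase (0 : Fin n), z i ^ 2)

/-- The cusp domain `Ω_α = {0 < x < 1, |y| < x^α} ⊆ ℝⁿ`. -/
noncomputable def cuspDomain (n : ℕ) [NeZero n] (α : ℝ) : Set (EuclideanSpace ℝ (Fin n)) :=
  {z | 0 < z 0 ∧ z 0 < 1 ∧ radial z < (z 0) ^ α}

/-- The set `S_{j,m}` of the generalized Whitney subdivision of the cusp, where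
`ℓ = ⌊log₂ m⌋ + 1`. -/
noncomputable def cuspCell (n : ℕ) [NeZero n] (α : ℝ) (j m : ℕ) :
    Set (EuclideanSpace ℝ (Fin n)) :=
  let ℓ := Nat.log 2 m + 1
  {z | (m:ℝ)/2^(j+ℓ) ≤ z 0 ∧ z 0 ≤ (m+1:ℝ)/2^(j+ℓ) ∧
    (1 - 1/2^(ℓ-1)) * (z 0) ^ α ≤ radial z ∧ radial z ≤ (1 - 1/2^ℓ) * (z 0) ^ α}

/-! For `a ∈ S_{j,m}` with `x = a 0` we have `2^{-(j+1)} ≤ x ≤ 2^{-j}`, and the cell keeps a radial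
gap `x^α - radial a ≥ 2^{-ℓ} x^α ≥ 2^{-α} 2^{-(αj+ℓ)}` below the boundary. Moving by less than `ε`
raises `radial` by less than `ε` (it is 1-Lipschitz) and, by Bernoulli's inequality, lowers `x^α` by
at most `α ε` (as `x ≤ 1`). So with `ε = 2^{-α}/(α+1) · 2^{-(αj+ℓ)}` the whole ball `B(a, ε)` lies
in `Ω_α`, and every boundary point is at distance at least `ε` from `a`. -/

lemma le_setDist {n : ℕ} {A B : Set (EuclideanSpace ℝ (Fin n))} {ε : ℝ} (hA : A.Nonempty)
    (hB : B.Nonempty) (h : ∀ a ∈ A, ∀ b ∈ B, ε ≤ dist a b) : ε ≤ setDist A B := by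
  obtain ⟨a, ha⟩ := hA
  obtain ⟨b, hb⟩ := hB
  refine le_csInf ⟨dist a b, a, ha, b, hb, rfl⟩ ?_
  rintro _ ⟨a, ha, b, hb, rfl⟩
  exact h a ha b hb

lemma le_dist_of_ball_subset_of_mem_frontier {X : Type*} [PseudoMetricSpace X] {U : Set X}
    {a b : X} {ε : ℝ} (h : ball a ε ⊆ U) (hb : b ∈ frontier U) : ε ≤ dist a b := by
  by_contra! hlt
  exact hb.2 (interior_maximal h isOpen_ball (mem_ball'.2 hlt))

lemma rpow_sub_mul_le_rpow_sub {x ε α : ℝ} (hα : 1 ≤ α) (hε : 0 ≤ ε) (hεx : ε ≤ x)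
    (hx : x ≤ 1) : x ^ α - α * ε ≤ (x - ε) ^ α := by
  rcases (hε.trans hεx).eq_or_lt with rfl | hx0
  · obtain rfl : ε = 0 := le_antisymm hεx hε
    simp
  have hεx' : ε / x ≤ 1 := (div_le_one hx0).2 hεx
  have hxα : x ^ α * (ε / x) ≤ ε := by
    calc x ^ α * (ε / x) ≤ x * (ε / x) := by
          gcongr; exact Real.rpow_le_self_of_le_one hx0.le hx hα
      _ = ε := by field_simp
  calc x ^ α - α * ε ≤ x ^ α * (1 + α * -(ε / x)) := by nlinarith
    _ ≤ x ^ α * (1 + -(ε / x)) ^ α := by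
      gcongr; exact one_add_mul_self_le_rpow_one_add (by linarith) hα
    _ = (x - ε) ^ α := by
      rw [← Real.mul_rpow hx0.le (by linarith)]
      congr 1
      field_simp
      ring

section Cusp

variable {n : ℕ} [NeZero n]

noncomputable def offAxis (z : EuclideanSpace ℝ (Fin n)) : EuclideanSpace ℝ (Fin n) :=
  z - EuclideanSpace.single 0 (z 0)

lemma offAxis_apply (z : EuclideanSpace ℝ (Fin n)) (i : Fin n) :
    offAxis z i = if i = 0 then 0 else z i := by
  by_cases hi : i = 0 <;> simp [offAxis, hi]

lemma offAxis_sub (z w : EuclideanSpace ℝ (Fin n)) :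
    offAxis (z - w) = offAxis z - offAxis w := by
  ext i
  simp only [offAxis_apply, PiLp.sub_apply]
  split_ifs <;> ring

lemma norm_offAxis_le (z : EuclideanSpace ℝ (Fin n)) : ‖offAxis z‖ ≤ ‖z‖ := by
  rw [EuclideanSpace.norm_eq, EuclideanSpace.norm_eq]
  gcongr with i
  by_cases hi : i = 0 <;> simp [offAxis_apply, hi]

lemma radial_eq_norm_offAxis (z : EuclideanSpace ℝ (Fin n)) : radial z = ‖offAxis z‖ := by
  rw [radial, EuclideanSpace.norm_eq, ← Finset.add_sum_erase _ _ (Finset.mem_univ 0)]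
  simp only [offAxis_apply, if_pos, norm_zero, ne_eq, OfNat.ofNat_ne_zero, not_false_eq_true,
    zero_pow, zero_add]
  congr 1
  refine Finset.sum_congr rfl fun i hi => ?_
  simp [(Finset.mem_erase.mp hi).1]

lemma radial_le_radial_add_dist (z w : EuclideanSpace ℝ (Fin n)) :
    radial z ≤ radial w + dist z w := by
  rw [radial_eq_norm_offAxis, radial_eq_norm_offAxis, dist_eq_norm]
  calc ‖offAxis z‖ ≤ ‖offAxis w‖ + ‖offAxis z - offAxis w‖ := norm_le_norm_add_norm_sub' _ _
    _ ≤ ‖offAxis w‖ + ‖z - w‖ := by rw [← offAxis_sub]; gcongr; exact norm_offAxis_le _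

lemma radial_single_zero_add_single (x r : ℝ) {i : Fin n} (hi : i ≠ 0) :
    radial (EuclideanSpace.single 0 x + EuclideanSpace.single i r) = |r| := by
  have : offAxis (EuclideanSpace.single 0 x + EuclideanSpace.single i r) =
      EuclideanSpace.single i r := by
    ext k
    by_cases hk : k = 0 <;> simp [offAxis_apply, hk, hi.symm]
  rw [radial_eq_norm_offAxis, this, PiLp.norm_single, Real.norm_eq_abs]

lemma ball_subset_cuspDomain {α ε : ℝ} (hα : 1 ≤ α) {a : EuclideanSpace ℝ (Fin n)}
    (hεa : ε ≤ a 0) (ha1 : a 0 + ε ≤ 1) (hr : radial a + (α + 1) * ε ≤ a 0 ^ α) :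
    ball a ε ⊆ cuspDomain n α := by
  intro z hz
  rw [mem_ball] at hz
  have hε : 0 ≤ ε := dist_nonneg.trans hz.le
  have hz0 : |z 0 - a 0| < ε := by
    refine lt_of_le_of_lt ?_ hz
    simpa [dist_eq_norm] using PiLp.norm_apply_le (z - a) 0
  rw [abs_lt] at hz0
  refine ⟨by linarith, by linarith, ?_⟩
  calc radial z ≤ radial a + dist z a := radial_le_radial_add_dist z a
    _ < radial a + ε := by gcongr
    _ ≤ a 0 ^ α - α * ε := by linarith
    _ ≤ (a 0 - ε) ^ α := rpow_sub_mul_le_rpow_sub hα hε hεa (by linarith)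
    _ ≤ z 0 ^ α := Real.rpow_le_rpow (by linarith) (by linarith) (by linarith)

lemma nonempty_frontier_cuspDomain (α : ℝ) : (frontier (cuspDomain n α)).Nonempty := by
  refine nonempty_frontier_iff.2 ⟨⟨EuclideanSpace.single 0 (1 / 2), ?_⟩, fun h => ?_⟩
  · have : radial (EuclideanSpace.single 0 (1 / 2) : EuclideanSpace ℝ (Fin n)) = 0 := by
      simp [radial_eq_norm_offAxis, offAxis]
    refine ⟨by norm_num, by norm_num, ?_⟩
    simp only [this, PiLp.single_apply, if_true]
    positivity
  · simpa [cuspDomain] using h.ge (mem_univ (0 : EuclideanSpace ℝ (Fin n)))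

lemma cuspCell_nonempty (hn : 2 ≤ n) (α : ℝ) (j m : ℕ) : (cuspCell n α j m).Nonempty := by
  set ℓ := Nat.log 2 m + 1
  set x : ℝ := m / 2 ^ (j + ℓ)
  set r : ℝ := (1 - 1 / 2 ^ ℓ) * x ^ α
  have hr : 0 ≤ r := by
    have : (1 : ℝ) / 2 ^ ℓ ≤ 1 := by rw [div_le_one (by positivity)]; exact one_le_pow₀ one_le_two
    exact mul_nonneg (by linarith) (by positivity)
  have h1 : (⟨1, hn⟩ : Fin n) ≠ 0 := by simp [Fin.ext_iff]
  set z : EuclideanSpace ℝ (Fin n) :=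
    EuclideanSpace.single 0 x + EuclideanSpace.single (⟨1, hn⟩ : Fin n) r with hz
  have hx : z 0 = x := by simp [hz, h1.symm]
  have hrz : radial z = r := by rw [radial_single_zero_add_single x r h1, abs_of_nonneg hr]
  refine ⟨z, ?_⟩
  simp only [cuspCell, mem_ofPred_eq, hx, hrz]
  refine ⟨le_rfl, div_le_div_of_nonneg_right (by linarith) (by positivity), ?_, le_rfl⟩
  show (1 - 1 / 2 ^ (ℓ - 1)) * x ^ α ≤ (1 - 1 / 2 ^ ℓ) * x ^ α
  gcongr
  exacts [one_le_two, Nat.sub_le ℓ 1]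

lemma cuspCell_coord_bounds {α : ℝ} {j m : ℕ} (hm : 1 ≤ m) {a : EuclideanSpace ℝ (Fin n)}
    (ha : a ∈ cuspCell n α j m) : 1 / 2 ^ (j + 1) ≤ a 0 ∧ a 0 ≤ 1 / 2 ^ j := by
  obtain ⟨hlo, hhi, -, -⟩ := ha
  set L := Nat.log 2 m
  have hmL : (2 : ℝ) ^ L ≤ m := by exact_mod_cast Nat.pow_log_le_self 2 (by omega)
  have hmU : (m : ℝ) + 1 ≤ 2 ^ (L + 1) := by
    exact_mod_cast Nat.lt_pow_succ_log_self one_lt_two m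
  constructor
  · calc 1 / 2 ^ (j + 1) = (2 : ℝ) ^ L / 2 ^ (j + (L + 1)) := by
          rw [show j + (L + 1) = L + (j + 1) by ring, pow_add]; field_simp; ring
      _ ≤ a 0 := by grw [hmL]; exact hlo
  · calc a 0 ≤ ((m : ℝ) + 1) / 2 ^ (j + (L + 1)) := hhi
      _ ≤ 2 ^ (L + 1) / 2 ^ (j + (L + 1)) := by gcongr
      _ = 1 / 2 ^ j := by rw [pow_add]; field_simp; ring

lemma two_rpow_neg_mul_two_rpow_neg (α : ℝ) (j ℓ : ℕ) :
    (2 : ℝ) ^ (-α) * 2 ^ (-(α * j + ℓ)) = (1 / 2 ^ (j + 1)) ^ α / 2 ^ ℓ := by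
  rw [← Real.rpow_add two_pos, div_eq_mul_inv, ← Real.rpow_natCast 2 ℓ,
    ← Real.rpow_neg zero_le_two, one_div, ← Real.rpow_natCast 2 (j + 1),
    Real.inv_rpow (by positivity), ← Real.rpow_mul zero_le_two, ← Real.rpow_neg zero_le_two,
    ← Real.rpow_add two_pos]
  congr 1
  push_cast
  ring

lemma ball_subset_cuspDomain_of_mem_cuspCell {α : ℝ} (hα : 1 ≤ α) {j m : ℕ} (hj : 1 ≤ j)
    (hm : 1 ≤ m) {a : EuclideanSpace ℝ (Fin n)} (ha : a ∈ cuspCell n α j m) :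
    ball a (2 ^ (-α) / (α + 1) * 2 ^ (-(α * j + (Nat.log 2 m + 1 : ℕ)))) ⊆ cuspDomain n α := by
  set ℓ := Nat.log 2 m + 1
  set ε : ℝ := 2 ^ (-α) / (α + 1) * 2 ^ (-(α * j + ℓ)) with hεdef
  obtain ⟨hlo, hhi⟩ := cuspCell_coord_bounds hm ha
  have hr : radial a ≤ a 0 ^ α - a 0 ^ α / 2 ^ ℓ := by
    have h : radial a ≤ (1 - 1 / 2 ^ ℓ) * a 0 ^ α := ha.2.2.2
    linarith [show ((1 : ℝ) - 1 / 2 ^ ℓ) * a 0 ^ α = a 0 ^ α - a 0 ^ α / 2 ^ ℓ by ring]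
  have hx0 : 0 < a 0 := lt_of_lt_of_le (by positivity) hlo
  have hx1 : a 0 ≤ 1 / 2 := by
    refine hhi.trans ?_
    gcongr
    exact le_self_pow₀ one_le_two (by omega)
  have hε : 0 ≤ ε := by positivity
  have hkey : (α + 1) * ε ≤ a 0 ^ α / 2 ^ ℓ := by
    calc (α + 1) * ε = (1 / 2 ^ (j + 1)) ^ α / 2 ^ ℓ := by
          rw [← two_rpow_neg_mul_two_rpow_neg, hεdef]; field_simp
      _ ≤ a 0 ^ α / 2 ^ ℓ := by gcongr
  have hεx : ε ≤ a 0 / 2 := by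
    calc ε ≤ (α + 1) * ε := le_mul_of_one_le_left hε (by linarith)
      _ ≤ a 0 ^ α / 2 ^ ℓ := hkey
      _ ≤ a 0 / 2 := by
        gcongr
        · exact Real.rpow_le_self_of_le_one hx0.le (by linarith) hα
        · exact le_self_pow₀ one_le_two (by omega)
  exact ball_subset_cuspDomain hα (by linarith) (by linarith) (by linarith)

end Cusp

/-- Lower bound `δ(S_{j,m}) ≥ C(α)·2^{−(αj+ℓ)}` for the distance from
`S_{j,m}` to the boundary of the cusp `Ω_α`, where `ℓ = ⌊log₂ m⌋ + 1`. -/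
theorem cuspCell_dist_to_boundary (n : ℕ) [NeZero n] (hn : 2 ≤ n) (α : ℝ) (hα : 1 < α) :
    ∃ C : ℝ, 0 < C ∧ ∀ j m : ℕ, 1 ≤ j → 1 ≤ m →
      C * (2 : ℝ) ^ (-(α * j + (Nat.log 2 m + 1 : ℕ))) ≤
        setDist (cuspCell n α j m) (frontier (cuspDomain n α)) := by
  refine ⟨2 ^ (-α) / (α + 1), by positivity, fun j m hj hm => ?_⟩
  refine le_setDist (cuspCell_nonempty hn α j m) (nonempty_frontier_cuspDomain α) ?_
  intro a ha b hb
  exact le_dist_of_ball_subset_of_mem_frontier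
    (ball_subset_cuspDomain_of_mem_cuspCell hα.le hj hm ha) hb
end

section
/- Let n ≥ 2 and α > 1. There exists a constant C(α, n) such that for all integers j, m ≥ 1, with ℓ = ⌊log₂ m⌋ + 1, the n-dimensional Lebesgue measure of S_{j,m} satisfies |S_{j,m}| ≤ C(α, n) · 2^{−j(α(n−1)+1)} · 2^{−2ℓ}. -/
open MeasureTheory Metric Set
open scoped ENNReal


/-! The cell lies in the solid cylinder `[a, b] × {r₁ ≤ |y| ≤ r₂}` with `a = m 2^{-j-ℓ}`,
`b = a + 2^{-j-ℓ}`, `r₁ = (1 - 2^{1-ℓ}) a^α`, `r₂ = (1 - 2^{-ℓ}) b^α`, whose volume is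
`(b - a) (r₂^{n-1} - r₁^{n-1}) |B^{n-1}|`. Since `2^{ℓ-1} ≤ m < 2^ℓ`, the interval `[a, b]` lies in
`[2^{-j}/2, 2^{-j}]`, so the mean value inequalities for `x ↦ x^α` and `r ↦ r^{n-1}` bound the
shell thickness `r₂ - r₁` by `O(2^{-ℓ} 2^{-jα})` and the shell volume by
`O(2^{-ℓ} 2^{-jα(n-1)})`; the factor `b - a = 2^{-j} 2^{-ℓ}` gives the rest. -/

theorem rpow_sub_rpow_le_of_one_le {a b α : ℝ} (hα : 1 ≤ α) (ha : 0 ≤ a) (hb : 0 < b) :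
    b ^ α - a ^ α ≤ α * ((b - a) / b) * b ^ α := by
  have hbern : 1 + α * (a / b - 1) ≤ (a / b) ^ α := by
    simpa using one_add_mul_self_le_rpow_one_add (s := a / b - 1)
      (by linarith [div_nonneg ha hb.le]) hα
  have hsplit : a ^ α = (a / b) ^ α * b ^ α := by
    rw [← Real.mul_rpow (div_nonneg ha hb.le) hb.le, div_mul_cancel₀ a hb.ne']
  have hfrac : (b - a) / b = 1 - a / b := by field_simp
  rw [hsplit, hfrac]
  nlinarith [Real.rpow_pos_of_pos hb α]

theorem sub_mul_pow_sub_pow_le {α a b s t : ℝ} (hα : 1 ≤ α) (ht : 0 < t) (hta : t ≤ 2 * a)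
    (hbt : b ≤ t) (hs : 0 ≤ s) (hs₂ : s ≤ 2⁻¹) (hab : b - a = t * s) (d : ℕ) :
    (b - a) * (((1 - s) * b ^ α) ^ d - ((1 - 2 * s) * a ^ α) ^ d) ≤
      d * (2 * α + 2) * s ^ 2 * t ^ (α * d + 1) := by
  have ha : 0 < a := by linarith
  have hab' : a ≤ b := by nlinarith
  have hb : 0 < b := ha.trans_le hab'
  have haα : 0 ≤ a ^ α := by positivity
  have habα : a ^ α ≤ b ^ α := Real.rpow_le_rpow ha.le hab' (by linarith)
  have hbtα : b ^ α ≤ t ^ α := Real.rpow_le_rpow hb.le hbt (by linarith)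
  rcases Nat.eq_zero_or_pos d with rfl | hd
  · simp
  set r₁ := (1 - 2 * s) * a ^ α
  set r₂ := (1 - s) * b ^ α
  have hr₁ : 0 ≤ r₁ := mul_nonneg (by linarith) haα
  have hr₂ : r₂ ≤ t ^ α := by nlinarith
  -- `[a, b]` is short relative to `b`, since `t ≤ 2 a ≤ 2 b`
  have hrel : (b - a) / b ≤ 2 * s := by
    rw [hab, div_le_iff₀ hb]
    nlinarith
  have hpow : b ^ α - a ^ α ≤ 2 * α * s * b ^ α :=
    calc b ^ α - a ^ α ≤ α * ((b - a) / b) * b ^ α := rpow_sub_rpow_le_of_one_le hα ha.le hb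
      _ ≤ α * (2 * s) * b ^ α := by gcongr
      _ = 2 * α * s * b ^ α := by ring
  have hr₁₂ : r₂ - r₁ ≤ (2 * α + 2) * s * b ^ α := by nlinarith
  have hr₁r₂ : r₁ ≤ r₂ := by nlinarith
  have hdiff : r₂ ^ d - r₁ ^ d ≤ (r₂ - r₁) * d * (t ^ α) ^ (d - 1) := by
    calc r₂ ^ d - r₁ ^ d ≤ |r₂ - r₁| * d * max |r₂| |r₁| ^ (d - 1) :=
          (le_abs_self _).trans (abs_pow_sub_pow_le _ _ _)
      _ ≤ (r₂ - r₁) * d * (t ^ α) ^ (d - 1) := by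
          rw [abs_of_nonneg (sub_nonneg.2 hr₁r₂), abs_of_nonneg (hr₁.trans hr₁r₂),
            abs_of_nonneg hr₁, max_eq_left hr₁r₂]
          gcongr
          exact hr₁.trans hr₁r₂
  have htpow : t ^ (α * d + 1) = (t ^ α) ^ (d - 1) * t ^ α * t := by
    rw [pow_sub_one_mul hd.ne', ← Real.rpow_mul_natCast ht.le, Real.rpow_add_one ht.ne']
  calc (b - a) * (r₂ ^ d - r₁ ^ d)
        ≤ t * s * ((2 * α + 2) * s * b ^ α * d * (t ^ α) ^ (d - 1)) := by
        rw [hab]; gcongr; exact hdiff.trans (by gcongr)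
    _ ≤ t * s * ((2 * α + 2) * s * t ^ α * d * (t ^ α) ^ (d - 1)) := by gcongr
    _ = d * (2 * α + 2) * s ^ 2 * t ^ (α * d + 1) := by rw [htpow]; ring

theorem inv_two_pow_le_inv_two {ℓ : ℕ} (hℓ : ℓ ≠ 0) : ((2 : ℝ) ^ ℓ)⁻¹ ≤ 2⁻¹ :=
  inv_anti₀ two_pos (le_self_pow₀ one_le_two hℓ)

theorem inv_two_pow_rpow (k : ℕ) (x : ℝ) : ((2 : ℝ) ^ k)⁻¹ ^ x = 2 ^ (-(k * x)) := by
  rw [← Real.rpow_natCast, ← Real.rpow_neg zero_le_two, ← Real.rpow_mul zero_le_two, neg_mul]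

theorem dyadic_interval_bounds (j : ℕ) {m ℓ : ℕ} (hm : m ≠ 0) (hℓ : Nat.log 2 m + 1 = ℓ) :
    ((2 : ℝ) ^ j)⁻¹ ≤ 2 * (m / 2 ^ (j + ℓ)) ∧ ((m : ℝ) + 1) / 2 ^ (j + ℓ) ≤ ((2 : ℝ) ^ j)⁻¹ ∧
      ((m : ℝ) + 1) / 2 ^ (j + ℓ) - m / 2 ^ (j + ℓ) = ((2 : ℝ) ^ j)⁻¹ * ((2 : ℝ) ^ ℓ)⁻¹ := by
  subst hℓ
  have hlow : (2 : ℝ) ^ Nat.log 2 m ≤ m := by exact_mod_cast Nat.pow_log_le_self 2 hm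
  have hupp : (m : ℝ) + 1 ≤ 2 ^ (Nat.log 2 m + 1) := by
    exact_mod_cast Nat.lt_pow_succ_log_self Nat.one_lt_two m
  rw [pow_succ] at hupp
  rw [div_sub_div_same, add_sub_cancel_left, pow_add, pow_succ]
  refine ⟨?_, ?_, by field_simp⟩
  · rw [inv_le_iff_one_le_mul₀ (by positivity)]
    field_simp
    linarith
  · rw [div_le_iff₀ (by positivity)]
    field_simp
    linarith

theorem addHaar_closedBall_sdiff_ball {E : Type*} [NormedAddCommGroup E] [NormedSpace ℝ E]
    [MeasurableSpace E] [BorelSpace E] [FiniteDimensional ℝ E] [Nontrivial E] (μ : Measure E)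
    [μ.IsAddHaarMeasure] (x : E) {r₁ r₂ : ℝ} (h₁ : 0 ≤ r₁) (h₁₂ : r₁ ≤ r₂) :
    μ (closedBall x r₂ \ ball x r₁) =
      ENNReal.ofReal (r₂ ^ Module.finrank ℝ E - r₁ ^ Module.finrank ℝ E) * μ (ball 0 1) := by
  rw [measure_sdiff (ball_subset_closedBall.trans (closedBall_subset_closedBall h₁₂))
      measurableSet_ball.nullMeasurableSet measure_ball_lt_top.ne,
    Measure.addHaar_closedBall μ x (h₁.trans h₁₂), Measure.addHaar_ball μ x h₁,
    ← ENNReal.sub_mul fun _ _ ↦ measure_ball_lt_top.ne, ← ENNReal.ofReal_sub _ (by positivity)]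

noncomputable def headTailEquiv (d : ℕ) :
    EuclideanSpace ℝ (Fin (d + 1)) ≃ᵐ ℝ × EuclideanSpace ℝ (Fin d) :=
  (MeasurableEquiv.toLp 2 _).symm.trans <| (MeasurableEquiv.piFinSuccAbove (fun _ ↦ ℝ) 0).trans <|
    (MeasurableEquiv.refl ℝ).prodCongr (MeasurableEquiv.toLp 2 _)

@[simp]
theorem headTailEquiv_apply {d : ℕ} (z : EuclideanSpace ℝ (Fin (d + 1))) :
    headTailEquiv d z = (z 0, WithLp.toLp 2 fun i ↦ z i.succ) :=
  rfl

theorem measurePreserving_headTailEquiv (d : ℕ) : MeasurePreserving (headTailEquiv d) :=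
  (PiLp.volume_preserving_ofLp _).trans <| (volume_preserving_piFinSuccAbove (fun _ ↦ ℝ) 0).trans <|
    (MeasurePreserving.id volume).prod (PiLp.volume_preserving_toLp _)

theorem radial_eq_norm_snd_headTailEquiv {d : ℕ} (z : EuclideanSpace ℝ (Fin (d + 1))) :
    radial z = ‖(headTailEquiv d z).2‖ := by
  rw [radial, EuclideanSpace.norm_eq, Finset.univ.sum_erase_eq_sub (Finset.mem_univ _),
    Fin.sum_univ_succ]
  simp

def annularCylinder (n : ℕ) [NeZero n] (a b r₁ r₂ : ℝ) : Set (EuclideanSpace ℝ (Fin n)) :=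
  {z | z 0 ∈ Icc a b ∧ radial z ∈ Icc r₁ r₂}

theorem annularCylinder_eq_preimage (d : ℕ) (a b r₁ r₂ : ℝ) :
    annularCylinder (d + 1) a b r₁ r₂ =
      headTailEquiv d ⁻¹' (Icc a b ×ˢ (closedBall 0 r₂ \ ball 0 r₁)) := by
  ext z
  simp [annularCylinder, radial_eq_norm_snd_headTailEquiv, and_comm]

theorem volume_annularCylinder (d : ℕ) [NeZero d] (a b : ℝ) {r₁ r₂ : ℝ} (h₁ : 0 ≤ r₁)
    (h₁₂ : r₁ ≤ r₂) :
    volume (annularCylinder (d + 1) a b r₁ r₂) = ENNReal.ofReal (b - a) *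
      (ENNReal.ofReal (r₂ ^ d - r₁ ^ d) * volume (ball (0 : EuclideanSpace ℝ (Fin d)) 1)) := by
  rw [annularCylinder_eq_preimage, (measurePreserving_headTailEquiv d).measure_preimage
      (measurableSet_Icc.prod (measurableSet_closedBall.diff measurableSet_ball)).nullMeasurableSet,
    Measure.volume_eq_prod, Measure.prod_prod, Real.volume_Icc,
    addHaar_closedBall_sdiff_ball _ _ h₁ h₁₂, finrank_euclideanSpace_fin]

theorem volume_annularCylinder_le {d : ℕ} [NeZero d] {α a b s t : ℝ} (hα : 1 ≤ α) (ht : 0 < t)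
    (hta : t ≤ 2 * a) (hbt : b ≤ t) (hs : 0 ≤ s) (hs₂ : s ≤ 2⁻¹) (hab : b - a = t * s) :
    volume (annularCylinder (d + 1) a b ((1 - 2 * s) * a ^ α) ((1 - s) * b ^ α)) ≤
      ENNReal.ofReal (d * (2 * α + 2) * s ^ 2 * t ^ (α * d + 1)) *
        volume (ball (0 : EuclideanSpace ℝ (Fin d)) 1) := by
  have ha : 0 ≤ a := by linarith
  have hab' : a ≤ b := by nlinarith
  have hr₁ : 0 ≤ (1 - 2 * s) * a ^ α := mul_nonneg (by linarith) (Real.rpow_nonneg ha α)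
  have hr₁₂ : (1 - 2 * s) * a ^ α ≤ (1 - s) * b ^ α :=
    mul_le_mul (by linarith) (Real.rpow_le_rpow ha hab' (by linarith)) (Real.rpow_nonneg ha α)
      (by linarith)
  rw [volume_annularCylinder d a b hr₁ hr₁₂, ← mul_assoc, ← ENNReal.ofReal_mul (by linarith)]
  exact mul_le_mul_left
    (ENNReal.ofReal_le_ofReal (sub_mul_pow_sub_pow_le hα ht hta hbt hs hs₂ hab d)) _

theorem cuspCell_subset_annularCylinder (n : ℕ) [NeZero n] {α : ℝ} (hα : 0 ≤ α) (j : ℕ)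
    {m ℓ : ℕ} (hℓ : Nat.log 2 m + 1 = ℓ) :
    cuspCell n α j m ⊆ annularCylinder n (m / 2 ^ (j + ℓ)) ((m + 1) / 2 ^ (j + ℓ))
      ((1 - 2 * ((2 : ℝ) ^ ℓ)⁻¹) * (m / 2 ^ (j + ℓ)) ^ α)
      ((1 - ((2 : ℝ) ^ ℓ)⁻¹) * ((m + 1) / 2 ^ (j + ℓ)) ^ α) := by
  subst hℓ
  have hs := inv_two_pow_le_inv_two (Nat.add_one_ne_zero (Nat.log 2 m))
  have hs' : (1 : ℝ) / 2 ^ (Nat.log 2 m + 1 - 1) = 2 * ((2 : ℝ) ^ (Nat.log 2 m + 1))⁻¹ := by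
    rw [Nat.add_sub_cancel, pow_succ]; field_simp
  rintro z ⟨haz, hzb, hlow, hupp⟩
  rw [hs'] at hlow
  rw [one_div] at hupp
  refine ⟨⟨haz, hzb⟩, le_trans ?_ hlow, hupp.trans ?_⟩
  · gcongr
    linarith
  · gcongr
    · linarith
    · exact (by positivity : (0 : ℝ) ≤ _).trans haz

/-- Measure bound `|S_{j,m}| ≤ C(α,n)·2^{−j(α(n−1)+1)}·2^{−2ℓ}`,
where `ℓ = ⌊log₂ m⌋ + 1`. -/
theorem cuspCell_measure_bound (n : ℕ) [NeZero n] (hn : 2 ≤ n) (α : ℝ) (hα : 1 < α) :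
    ∃ C : ℝ, 0 < C ∧ ∀ j m : ℕ, 1 ≤ j → 1 ≤ m →
      volume (cuspCell n α j m) ≤
        ENNReal.ofReal (C * (2 : ℝ) ^ (-((j : ℝ) * (α * ((n : ℝ) - 1) + 1))) *
          (2 : ℝ) ^ (-(2 * ((Nat.log 2 m + 1 : ℕ) : ℝ)))) := by
  obtain ⟨d, rfl⟩ : ∃ d, n = d + 1 := ⟨n - 1, by omega⟩
  have hd : 0 < d := by omega
  have : NeZero d := ⟨hd.ne'⟩
  have hκ : 0 < (volume (ball (0 : EuclideanSpace ℝ (Fin d)) 1)).toReal :=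
    ENNReal.toReal_pos (measure_ball_pos _ _ one_pos).ne' measure_ball_lt_top.ne
  refine ⟨(volume (ball (0 : EuclideanSpace ℝ (Fin d)) 1)).toReal * (d * (2 * α + 2)),
    by positivity, fun j m _ hm ↦ ?_⟩
  obtain ⟨hta, hbt, hab⟩ := dyadic_interval_bounds j (m := m) (by omega) rfl
  refine (measure_mono (cuspCell_subset_annularCylinder _ (by linarith) j rfl)).trans <|
    (volume_annularCylinder_le hα.le (by positivity) hta hbt (by positivity)
      (inv_two_pow_le_inv_two (Nat.add_one_ne_zero _)) hab).trans_eq ?_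
  conv_lhs => rw [← ENNReal.ofReal_toReal measure_ball_lt_top.ne]
  rw [← ENNReal.ofReal_mul (by positivity)]
  congr 1
  rw [← Real.rpow_two, inv_two_pow_rpow, inv_two_pow_rpow]
  push_cast
  ring_nf
end
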